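/- arXiv:0708.0518 — 7 statements merged into one kernel-verified Lean document; each statement's English description precedes it below -/
import Mathlib

section
/- For every n ≥ 1 and every triple H, K₁, K₂ of Hermitian n×n complex matrices, the function f : ℝ × ℝ → ℝ defined by f(x, y) = Real.log (Re (Matrix.trace (Matrix.exp (H + x • K₁ + y • K₂)))) is convex on ℝ². (This is the finite-dimensional core of the paper's Lemma 5(i): the pressure function p̃(ν) = β⁻¹ log Tr exp(β(μn − h + ν a* + ν̄ a)) is convex in ν, proved via positive-definiteness of its Hessian.) -/
/-!
`A ↦ log Tr e^A` is convex on Hermitian matrices, and `(x, y) ↦ H + x K₁ + y K₂` is affine.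
To compare the two sides at `N = a A + b B`, diagonalize `N` in an orthonormal eigenbasis
`(vᵢ)`: then `Tr e^N = ∑ᵢ exp (a ⟪vᵢ, A vᵢ⟫ + b ⟪vᵢ, B vᵢ⟫)`. Log-sum-exp is convex (Hölder),
and the Peierls–Bogoliubov inequality `∑ᵢ exp ⟪vᵢ, A vᵢ⟫ ≤ Tr e^A` (Jensen for `exp`, since
each diagonal entry of `A` is a convex combination of its eigenvalues) bounds each term.
-/

open Real Finset

theorem Real.sum_exp_mul_add_mul_le {ι : Type*} [Fintype ι] [Nonempty ι] {a b : ℝ}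
    (ha : 0 ≤ a) (hb : 0 ≤ b) (hab : a + b = 1) (x y : ι → ℝ) :
    ∑ i, exp (a * x i + b * y i) ≤ (∑ i, exp (x i)) ^ a * (∑ i, exp (y i)) ^ b := by
  set X := ∑ i, exp (x i)
  set Y := ∑ i, exp (y i)
  have hX : 0 < X := sum_pos (fun i _ => exp_pos _) univ_nonempty
  have hY : 0 < Y := sum_pos (fun i _ => exp_pos _) univ_nonempty
  have hterm (i : ι) : exp (a * x i + b * y i) / (X ^ a * Y ^ b)
      ≤ a * (exp (x i) / X) + b * (exp (y i) / Y) := by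
    have hsplit : exp (a * x i + b * y i) / (X ^ a * Y ^ b)
        = (exp (x i) / X) ^ a * (exp (y i) / Y) ^ b := by
      rw [div_rpow (exp_pos _).le hX.le, div_rpow (exp_pos _).le hY.le, ← exp_mul, ← exp_mul,
        exp_add, mul_comm a, mul_comm b]
      ring
    rw [hsplit]
    exact geom_mean_le_arith_mean2_weighted ha hb (by positivity) (by positivity) hab
  rw [← div_le_one (by positivity), sum_div]
  calc ∑ i, exp (a * x i + b * y i) / (X ^ a * Y ^ b)
      ≤ ∑ i, (a * (exp (x i) / X) + b * (exp (y i) / Y)) := sum_le_sum fun i _ => hterm i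
    _ = 1 := by
      rw [sum_add_distrib, ← mul_sum, ← mul_sum, ← sum_div, ← sum_div, div_self hX.ne',
        div_self hY.ne', mul_one, mul_one, hab]

theorem Real.convexOn_log_sum_exp {ι : Type*} [Fintype ι] :
    ConvexOn ℝ Set.univ fun x : ι → ℝ => log (∑ i, exp (x i)) := by
  rcases isEmpty_or_nonempty ι with _ | _
  · simpa using convexOn_const (0 : ℝ) (convex_univ (𝕜 := ℝ) (E := ι → ℝ))
  refine ⟨convex_univ, fun x _ y _ a b ha hb hab => ?_⟩
  have hpos (z : ι → ℝ) : 0 < ∑ i, exp (z i) := sum_pos (fun i _ => exp_pos _) univ_nonempty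
  calc log (∑ i, exp ((a • x + b • y) i))
      ≤ log ((∑ i, exp (x i)) ^ a * (∑ i, exp (y i)) ^ b) :=
        log_le_log (hpos _) (sum_exp_mul_add_mul_le ha hb hab x y)
    _ = a • log (∑ i, exp (x i)) + b • log (∑ i, exp (y i)) := by
      rw [log_mul (rpow_pos_of_pos (hpos x) a).ne' (rpow_pos_of_pos (hpos y) b).ne',
        log_rpow (hpos x), log_rpow (hpos y), smul_eq_mul, smul_eq_mul]

namespace Matrix

open Unitary

variable {n : Type*} [Fintype n] [DecidableEq n]

theorem exp_conjStarAlgAut (U : unitary (Matrix n n ℂ)) (A : Matrix n n ℂ) :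
    NormedSpace.exp (conjStarAlgAut ℂ _ U A) = conjStarAlgAut ℂ _ U (NormedSpace.exp A) := by
  have hinv : (U : Matrix n n ℂ)⁻¹ = star (U : Matrix n n ℂ) :=
    inv_eq_right_inv (Unitary.mul_star_self_of_mem U.2)
  rw [conjStarAlgAut_apply, conjStarAlgAut_apply, ← hinv]
  exact exp_conj _ _ (Unitary.toUnits U).isUnit

theorem trace_conjStarAlgAut (U : unitary (Matrix n n ℂ)) (A : Matrix n n ℂ) :
    trace (conjStarAlgAut ℂ _ U A) = trace A := by
  rw [conjStarAlgAut_apply, trace_mul_cycle, Unitary.coe_star_mul_self, one_mul]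

theorem trace_exp_conjStarAlgAut (U : unitary (Matrix n n ℂ)) (A : Matrix n n ℂ) :
    trace (NormedSpace.exp (conjStarAlgAut ℂ _ U A)) = trace (NormedSpace.exp A) := by
  rw [exp_conjStarAlgAut, trace_conjStarAlgAut]

theorem exp_diagonal_ofReal (d : n → ℝ) :
    NormedSpace.exp (diagonal fun i => (d i : ℂ)) = diagonal fun i => (exp (d i) : ℂ) := by
  rw [exp_diagonal, Pi.exp_def]
  simp only [← Complex.exp_eq_exp_ℂ, ← Complex.ofReal_exp]

theorem re_trace_exp_diagonal_ofReal (d : n → ℝ) :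
    (trace (NormedSpace.exp (diagonal fun i => (d i : ℂ)))).re = ∑ i, exp (d i) := by
  simp [exp_diagonal_ofReal, trace_diagonal, Complex.re_sum, Complex.exp_ofReal_re]

theorem sum_normSq_unitary_apply (U : unitary (Matrix n n ℂ)) (i : n) :
    ∑ j, Complex.normSq (U i j) = 1 := by
  have h := congr_arg Complex.re (congr_fun (congr_fun (Unitary.coe_mul_star_self U) i) i)
  simpa [mul_apply, Complex.mul_conj, one_apply] using h

theorem re_conjStarAlgAut_diagonal_apply_self (U : unitary (Matrix n n ℂ)) (d : n → ℝ) (i : n) :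
    (conjStarAlgAut ℂ _ U (diagonal fun j => (d j : ℂ)) i i).re
      = ∑ j, Complex.normSq (U i j) * d j := by
  rw [conjStarAlgAut_apply, mul_apply, Complex.re_sum]
  refine sum_congr rfl fun j _ => ?_
  rw [mul_diagonal, star_apply, mul_right_comm, Complex.star_def, Complex.mul_conj,
    ← Complex.ofReal_mul, Complex.ofReal_re]

theorem IsHermitian.sum_exp_re_diag_le_re_trace_exp {A : Matrix n n ℂ} (hA : A.IsHermitian) :
    ∑ i, Real.exp (A i i).re ≤ (trace (NormedSpace.exp A)).re := by
  obtain ⟨U, d, rfl⟩ : ∃ (U : unitary (Matrix n n ℂ)) (d : n → ℝ),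
      A = conjStarAlgAut ℂ _ U (diagonal fun j => (d j : ℂ)) :=
    ⟨_, _, hA.spectral_theorem⟩
  rw [exp_conjStarAlgAut, exp_diagonal_ofReal, trace, Complex.re_sum]
  refine sum_le_sum fun i _ => ?_
  rw [diag_apply, re_conjStarAlgAut_diagonal_apply_self, re_conjStarAlgAut_diagonal_apply_self]
  simpa only [smul_eq_mul] using convexOn_exp.map_sum_le (fun j _ => Complex.normSq_nonneg _)
    (sum_normSq_unitary_apply U i) (fun j _ => Set.mem_univ (d j))

theorem IsHermitian.sum_exp_re_conjStarAlgAut_diag_le {A : Matrix n n ℂ} (hA : A.IsHermitian)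
    (U : unitary (Matrix n n ℂ)) :
    ∑ i, Real.exp (conjStarAlgAut ℂ _ U A i i).re ≤ (trace (NormedSpace.exp A)).re := by
  rw [← trace_exp_conjStarAlgAut U A]
  exact (hA.isSelfAdjoint.map _).isHermitian.sum_exp_re_diag_le_re_trace_exp

theorem convexOn_log_re_trace_exp :
    ConvexOn ℝ {A : Matrix n n ℂ | A.IsHermitian}
      fun A => Real.log (trace (NormedSpace.exp A)).re := by
  refine ⟨(selfAdjoint.submodule ℝ (Matrix n n ℂ)).convex, fun A hA B hB a b ha hb hab => ?_⟩
  rcases isEmpty_or_nonempty n with _ | _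
  · simp [trace]
  have hN : (a • A + b • B).IsHermitian := (selfAdjoint.submodule ℝ _).convex hA hB ha hb hab
  set conjV := conjStarAlgAut ℂ (Matrix n n ℂ) (star hN.eigenvectorUnitary)
  have hdiag : conjV (a • A + b • B) = diagonal fun i => (hN.eigenvalues i : ℂ) :=
    hN.conjStarAlgAut_star_eigenvectorUnitary
  have hlin : conjV (a • A + b • B) = a • conjV A + b • conjV B := by
    rw [map_add, LinearMapClass.map_smul_of_tower conjV, LinearMapClass.map_smul_of_tower conjV]
  have heig :
      hN.eigenvalues = a • (fun i => (conjV A i i).re) + b • fun i => (conjV B i i).re := by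
    funext i
    simpa [hlin] using congr_arg (fun M => (M i i).re) hdiag.symm
  have hpeierls {M : Matrix n n ℂ} (hM : M.IsHermitian) :
      Real.log (∑ i, Real.exp (conjV M i i).re) ≤ Real.log (trace (NormedSpace.exp M)).re :=
    Real.log_le_log (sum_pos (fun i _ => Real.exp_pos _) univ_nonempty)
      (hM.sum_exp_re_conjStarAlgAut_diag_le _)
  calc Real.log (trace (NormedSpace.exp (a • A + b • B))).re
      = Real.log (∑ i, Real.exp (hN.eigenvalues i)) := by
        rw [← trace_exp_conjStarAlgAut (star hN.eigenvectorUnitary), hdiag,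
          re_trace_exp_diagonal_ofReal]
    _ ≤ a • Real.log (∑ i, Real.exp (conjV A i i).re)
          + b • Real.log (∑ i, Real.exp (conjV B i i).re) := by
        rw [heig]
        exact Real.convexOn_log_sum_exp.2 trivial trivial ha hb hab
    _ ≤ a • Real.log (trace (NormedSpace.exp A)).re
          + b • Real.log (trace (NormedSpace.exp B)).re := by
        gcongr a • ?_ + b • ?_
        exacts [hpeierls hA, hpeierls hB]

end Matrix

theorem pressure_convex_general {n : ℕ}
    (H K₁ K₂ : Matrix (Fin n) (Fin n) ℂ)
    (hH : H.IsHermitian) (hK₁ : K₁.IsHermitian) (hK₂ : K₂.IsHermitian) :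
    ConvexOn ℝ Set.univ (fun p : ℝ × ℝ =>
      Real.log ((Matrix.trace (NormedSpace.exp (H + p.1 • K₁ + p.2 • K₂))).re)) := by
  have hherm (p : ℝ × ℝ) : (H + p.1 • K₁ + p.2 • K₂).IsHermitian :=
    (hH.add (hK₁.smul (IsSelfAdjoint.all p.1))).add (hK₂.smul (IsSelfAdjoint.all p.2))
  refine ⟨convex_univ, fun p _ q _ a b ha hb hab => ?_⟩
  have hcomb : H + (a • p + b • q).1 • K₁ + (a • p + b • q).2 • K₂
      = a • (H + p.1 • K₁ + p.2 • K₂) + b • (H + q.1 • K₁ + q.2 • K₂) := by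
    simp only [Prod.fst_add, Prod.snd_add, Prod.smul_fst, Prod.smul_snd, smul_eq_mul]
    linear_combination (norm := module) (-hab) • H
  simpa only [hcomb] using Matrix.convexOn_log_re_trace_exp.2 (hherm p) (hherm q) ha hb hab

/-- **Convexity of the pressure function** (finite-dimensional core of Lemma 5(i)).
For every `n ≥ 1` and Hermitian `n × n` complex matrices `H`, `K₁`, `K₂`, the function
`(x, y) ↦ log (Re (Tr (exp (H + x • K₁ + y • K₂))))` is convex on `ℝ²`. -/
theorem pressure_convex {n : ℕ} (hn : 1 ≤ n)
    (H K₁ K₂ : Matrix (Fin n) (Fin n) ℂ)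
    (hH : H.IsHermitian) (hK₁ : K₁.IsHermitian) (hK₂ : K₂.IsHermitian) :
    ConvexOn ℝ Set.univ (fun p : ℝ × ℝ =>
      Real.log ((Matrix.trace (NormedSpace.exp (H + p.1 • K₁ + p.2 • K₂))).re)) :=
  pressure_convex_general H K₁ K₂ hH hK₁ hK₂
end

section
/- Let β > 0, λ > 0 and μ ∈ ℝ. Then: (i) for every t ≥ 0 the series Z(t) = ∑_{n=0}^∞ exp(β((μ−1)·n − λ·n·(n−1) + 2·t·√(n+1))) converges (the family is summable); and (ii) there exist constants C > 0 and T ≥ 1 such that for all t ≥ T one has Real.log (Z(t)) ≤ C · t^{4/3}. (This is the upper-bound half of the growth estimate p̃(ν) ∼ |ν|^{4/3} in the paper's Lemma 5(ii), obtained from the operator inequality ν a* + ν̄ a ≤ 2|ν|(n+1)^{1/2}.) -/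
set_option maxHeartbeats 1000000

private lemma key_ptwise (β lam μ : ℝ) (hβ : 0 < β) (hlam : 0 < lam) :
    ∃ C₁ : ℝ, 0 < C₁ ∧ ∀ t : ℝ, 1 ≤ t → ∀ n : ℕ,
      β * ((μ - 1) * n - lam * n * (n - 1) + 2 * t * Real.sqrt (n + 1))
        ≤ C₁ * t ^ ((4 : ℝ) / 3) - n := by
  set A : ℝ := (8 / lam) ^ ((1 : ℝ) / 3) with hA
  set B₀ : ℝ := (β * (μ - 1) + β * lam + 1) ^ 2 / (4 * β * lam) with hB₀
  set B₂ : ℝ := (β * (μ - 1) + β * lam + 1 + β * lam / 2) ^ 2 / (3 * β * lam)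
      + β * lam / 4 with hB₂
  have hApos : 0 < A := Real.rpow_pos_of_pos (by positivity) _
  have hA3 : A ^ (3 : ℕ) = 8 / lam := by
    rw [hA, ← Real.rpow_natCast ((8 / lam) ^ ((1:ℝ)/3)) 3, ← Real.rpow_mul (by positivity)]
    norm_num
  have hB₀0 : 0 ≤ B₀ := by rw [hB₀]; positivity
  have hB₂0 : 0 ≤ B₂ := by rw [hB₂]; positivity
  have hquad : ∀ x : ℝ, β * ((μ - 1) * x - lam * x * (x - 1)) + x ≤ B₀ := by
    intro x
    rw [hB₀, le_div_iff₀ (by positivity)]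
    nlinarith [sq_nonneg (2 * β * lam * x - (β * (μ - 1) + β * lam + 1))]
  have hq2 : ∀ x : ℝ, β * ((μ - 1) * x - lam * x * (x - 1)) + x + β * lam / 4 * (x + 1) ^ 2 ≤ B₂ := by
    intro x
    rw [hB₂, ← sub_le_iff_le_add, le_div_iff₀ (by positivity)]
    nlinarith [sq_nonneg (3 * β * lam * x - 2 * (β * (μ - 1) + β * lam + 1 + β * lam / 2))]
  clear_value A B₀ B₂
  clear hA hB₀ hB₂
  refine ⟨B₀ + B₂ + 2 * β * A + 1, by positivity, fun t ht n => ?_⟩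
  have ht0 : 0 < t := by linarith
  have h13 : (t ^ ((1:ℝ)/3)) ^ (3 : ℕ) = t := by
    rw [← Real.rpow_natCast (t ^ ((1:ℝ)/3)) 3, ← Real.rpow_mul ht0.le]
    norm_num
  have h43 : t ^ ((4:ℝ)/3) = t * t ^ ((1:ℝ)/3) := by
    rw [show (4:ℝ)/3 = 1 + 1/3 by norm_num, Real.rpow_add ht0, Real.rpow_one]
  have h1le : 1 ≤ t ^ ((4:ℝ)/3) := by
    calc (1:ℝ) = 1 ^ ((4:ℝ)/3) := by rw [Real.one_rpow]
    _ ≤ t ^ ((4:ℝ)/3) := Real.rpow_le_rpow (by norm_num) ht (by norm_num)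
  have ht30 : 0 < t ^ ((1:ℝ)/3) := Real.rpow_pos_of_pos ht0 _
  set s : ℝ := Real.sqrt (n + 1) with hs
  have hs2 : s ^ 2 = (n : ℝ) + 1 := Real.sq_sqrt (by positivity)
  have hs0 : 0 ≤ s := Real.sqrt_nonneg _
  by_cases hcase : s ≤ A * t ^ ((1:ℝ)/3)
  · have hts : 2 * β * t * s ≤ 2 * β * A * t ^ ((4:ℝ)/3) := by
      have h1 : 2 * β * t * s ≤ 2 * β * t * (A * t ^ ((1:ℝ)/3)) :=
        mul_le_mul_of_nonneg_left hcase (by positivity)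
      calc 2 * β * t * s ≤ 2 * β * t * (A * t ^ ((1:ℝ)/3)) := h1
      _ = 2 * β * A * (t * t ^ ((1:ℝ)/3)) := by ring
      _ = 2 * β * A * t ^ ((4:ℝ)/3) := by rw [← h43]
    nlinarith [hquad (n : ℝ), mul_pos hβ hApos,
      mul_nonneg (by positivity : (0:ℝ) ≤ B₂ + 1) (by linarith : (0:ℝ) ≤ t ^ ((4:ℝ)/3) - 1),
      mul_nonneg hB₀0 (by linarith : (0:ℝ) ≤ t ^ ((4:ℝ)/3) - 1)]
  · push_neg at hcase
    have hcube : (A * t ^ ((1:ℝ)/3)) ^ (3:ℕ) < s ^ (3:ℕ) :=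
      pow_lt_pow_left₀ hcase (by positivity) (by norm_num)
    have h8t : 8 / lam * t < s ^ 3 := by
      calc 8 / lam * t = A ^ 3 * (t ^ ((1:ℝ)/3)) ^ 3 := by rw [hA3, h13]
      _ = (A * t ^ ((1:ℝ)/3)) ^ 3 := by ring
      _ < s ^ 3 := hcube
    have h8t' : 8 * t < lam * s ^ 3 := by
      rw [div_mul_eq_mul_div, div_lt_iff₀ hlam] at h8t; linarith [h8t]
    have hts : 2 * β * t * s ≤ β * lam / 4 * s ^ 4 := by
      nlinarith [mul_le_mul_of_nonneg_left h8t'.le (by positivity : (0:ℝ) ≤ β * s / 4)]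
    have hs4 : s ^ 4 = ((n:ℝ) + 1) ^ 2 := by
      rw [show (4:ℕ) = 2 * 2 from rfl, pow_mul, hs2]
    rw [hs4] at hts
    have h5 : β * ((μ - 1) * n - lam * n * (n - 1) + 2 * t * s) ≤ B₂ - n := by
      nlinarith [hq2 (n : ℝ), hts]
    have hβA : (0:ℝ) ≤ β * A := (mul_pos hβ hApos).le
    have ht43 : (0:ℝ) ≤ t ^ ((4:ℝ)/3) := by linarith
    have e1 : B₂ ≤ B₂ * t ^ ((4:ℝ)/3) := le_mul_of_one_le_right hB₂0 h1le
    have e2 : 0 ≤ (B₀ + 2 * β * A + 1) * t ^ ((4:ℝ)/3) :=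
      mul_nonneg (by linarith) ht43
    have h6 : B₂ ≤ (B₀ + B₂ + 2 * β * A + 1) * t ^ ((4:ℝ)/3) := by nlinarith [e1, e2]
    linarith

private lemma sqrt_succ_le' (x : ℝ) (hx : 0 ≤ x) :
    Real.sqrt (x + 1) ≤ Real.sqrt x + 1 := by
  have h1 : Real.sqrt x ^ 2 = x := Real.sq_sqrt hx
  have h2 : 0 ≤ Real.sqrt x := Real.sqrt_nonneg x
  calc Real.sqrt (x + 1) ≤ Real.sqrt ((Real.sqrt x + 1) ^ 2) :=
        Real.sqrt_le_sqrt (by nlinarith)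
  _ = Real.sqrt x + 1 := Real.sqrt_sq (by linarith)

lemma summ_aux (β lam μ : ℝ) (hβ : 0 < β) (hlam : 0 < lam) (t : ℝ) (ht : 0 ≤ t) :
    Summable (fun n : ℕ =>
      Real.exp (β * ((μ - 1) * n - lam * n * (n - 1) + 2 * t * Real.sqrt (n + 1)))) := by
  apply summable_of_ratio_norm_eventually_le (r := Real.exp (-1))
  · exact Real.exp_lt_one_iff.mpr (by norm_num)
  · refine Filter.eventually_atTop.2 ⟨⌈(β * (μ - 1) + 2 * β * t + 1) / (2 * β * lam)⌉₊,
      fun n hn => ?_⟩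
    have hN : (β * (μ - 1) + 2 * β * t + 1) / (2 * β * lam) ≤ (n : ℝ) :=
      le_trans (Nat.le_ceil _) (Nat.cast_le.2 hn)
    have hN' : β * (μ - 1) + 2 * β * t + 1 ≤ 2 * β * lam * n := by
      rw [div_le_iff₀ (by positivity)] at hN; linarith
    rw [Real.norm_eq_abs, Real.norm_eq_abs, abs_of_pos (Real.exp_pos _),
      abs_of_pos (Real.exp_pos _), ← Real.exp_add, Real.exp_le_exp]
    push_cast
    have hv : Real.sqrt ((n : ℝ) + 1 + 1) ≤ Real.sqrt ((n : ℝ) + 1) + 1 :=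
      sqrt_succ_le' _ (by positivity)
    have h2 : 2 * β * t * Real.sqrt ((n : ℝ) + 1 + 1)
        ≤ 2 * β * t * (Real.sqrt ((n : ℝ) + 1) + 1) :=
      mul_le_mul_of_nonneg_left hv (by positivity)
    nlinarith [h2, hN']



/-- **Upper bound half of the growth estimate `p̃(ν) ∼ |ν|^{4/3}`** (Lemma 5(ii)).
For `β > 0`, `λ > 0`, `μ ∈ ℝ`: (i) for every `t ≥ 0` the series
`Z(t) = ∑ₙ exp(β((μ−1)n − λ n(n−1) + 2t√(n+1)))` converges, and
(ii) there are `C > 0` and `T ≥ 1` with `log Z(t) ≤ C t^{4/3}` for all `t ≥ T`. -/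
theorem log_partition_sum_upper_bound (β lam μ : ℝ) (hβ : 0 < β) (hlam : 0 < lam) :
    (∀ t : ℝ, 0 ≤ t → Summable (fun n : ℕ =>
      Real.exp (β * ((μ - 1) * n - lam * n * (n - 1) + 2 * t * Real.sqrt (n + 1))))) ∧
    (∃ C : ℝ, 0 < C ∧ ∃ T : ℝ, 1 ≤ T ∧ ∀ t : ℝ, T ≤ t →
      Real.log (∑' n : ℕ,
          Real.exp (β * ((μ - 1) * n - lam * n * (n - 1) + 2 * t * Real.sqrt (n + 1))))
        ≤ C * t ^ ((4 : ℝ) / 3)) := by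
  constructor
  · exact summ_aux β lam μ hβ hlam
  · obtain ⟨C₁, hC₁, hkey⟩ := key_ptwise β lam μ hβ hlam
    refine ⟨C₁ + 1, by linarith, 1, le_refl 1, fun t ht => ?_⟩
    have ht0 : (0:ℝ) ≤ t := by linarith
    set f : ℕ → ℝ := fun n =>
      Real.exp (β * ((μ - 1) * n - lam * n * (n - 1) + 2 * t * Real.sqrt (n + 1))) with hf
    have hfs : Summable f := summ_aux β lam μ hβ hlam t ht0
    have hr1 : Real.exp (-1) < 1 := Real.exp_lt_one_iff.mpr (by norm_num)
    have hr0 : (0:ℝ) ≤ Real.exp (-1) := (Real.exp_pos _).le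
    have hgs : Summable (fun n : ℕ => Real.exp (C₁ * t ^ ((4:ℝ)/3)) * Real.exp (-1) ^ n) :=
      (summable_geometric_of_lt_one hr0 hr1).mul_left _
    have hle : ∀ n : ℕ, f n ≤ Real.exp (C₁ * t ^ ((4:ℝ)/3)) * Real.exp (-1) ^ n := by
      intro n
      rw [hf, ← Real.exp_nat_mul, ← Real.exp_add]
      exact Real.exp_le_exp.2 (by linarith [hkey t ht n])
    have hZle : ∑' n, f n ≤ Real.exp (C₁ * t ^ ((4:ℝ)/3)) * (1 - Real.exp (-1))⁻¹ := by
      calc ∑' n, f n ≤ ∑' n, Real.exp (C₁ * t ^ ((4:ℝ)/3)) * Real.exp (-1) ^ n :=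
            Summable.tsum_le_tsum hle hfs hgs
      _ = Real.exp (C₁ * t ^ ((4:ℝ)/3)) * ∑' n : ℕ, Real.exp (-1) ^ n := tsum_mul_left
      _ = Real.exp (C₁ * t ^ ((4:ℝ)/3)) * (1 - Real.exp (-1))⁻¹ := by
            rw [tsum_geometric_of_lt_one hr0 hr1]
    have hZpos : 0 < ∑' n, f n :=
      Summable.tsum_pos hfs (fun n => (Real.exp_pos _).le) 0 (Real.exp_pos _)
    have h1e : (0:ℝ) < 1 - Real.exp (-1) := by linarith
    have hlog : Real.log (∑' n, f n)
        ≤ C₁ * t ^ ((4:ℝ)/3) + Real.log (1 - Real.exp (-1))⁻¹ := by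
      calc Real.log (∑' n, f n)
          ≤ Real.log (Real.exp (C₁ * t ^ ((4:ℝ)/3)) * (1 - Real.exp (-1))⁻¹) :=
            Real.log_le_log hZpos hZle
      _ = C₁ * t ^ ((4:ℝ)/3) + Real.log (1 - Real.exp (-1))⁻¹ := by
            rw [Real.log_mul (Real.exp_ne_zero _) (by positivity), Real.log_exp]
    have hloginv : Real.log (1 - Real.exp (-1))⁻¹ ≤ 1 := by
      have hinv : (1 - Real.exp (-1))⁻¹ ≤ Real.exp 1 := by
        rw [inv_le_iff_one_le_mul₀ h1e]
        have he : Real.exp 1 * Real.exp (-1) = 1 := by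
          rw [← Real.exp_add]; norm_num
        nlinarith [Real.add_one_le_exp (1:ℝ)]
      calc Real.log (1 - Real.exp (-1))⁻¹ ≤ Real.log (Real.exp 1) :=
            Real.log_le_log (by positivity) hinv
      _ = 1 := Real.log_exp 1
    have h1le : 1 ≤ t ^ ((4:ℝ)/3) := by
      calc (1:ℝ) = 1 ^ ((4:ℝ)/3) := by rw [Real.one_rpow]
      _ ≤ t ^ ((4:ℝ)/3) := Real.rpow_le_rpow (by norm_num) ht (by norm_num)
    nlinarith [hlog, hloginv, h1le]
end

section
/- Let β > 0, λ > 0 and μ ∈ ℝ. Then: (i) for every t ∈ ℝ the function (x, y) ↦ exp(β((μ−1)·(x² + y²) − λ·(x² + y²)² + 2·t·x)) is integrable on ℝ²; and (ii) there exist constants c > 0 and T ≥ 1 such that for all t ≥ T, Real.log (∫_{ℝ²} exp(β((μ−1)·(x² + y²) − λ·(x² + y²)² + 2·t·x)) dx dy) ≥ c · t^{4/3}. (This is the lower-bound half of the growth estimate p̃(ν) ∼ |ν|^{4/3} in the paper's Lemma 5(ii), obtained from the Berezin–Lieb bound Tr e^{−H(ν)} ≥ ∫ (dz dz̄/π) e^{−⟨z|H(ν)|z⟩}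 evaluated on coherent states.) -/
/-!
Integrability holds because the quartic term `-λ r²` dominates everything else, so the
exponent is bounded above by `C - (x² + y²)` and the integrand by a Gaussian.

For the lower bound write `t = s³` and restrict the integral to the unit box
`[ε s, ε s + 1] × [0, 1]`, with `ε` small in terms of `λ`. There `x² + y² ≍ ε² s²`, so the
linear term `2 t x ≥ 2 ε s⁴` beats the quartic term `λ (x² + y²)² ≲ 25 λ ε⁴ s⁴` and the
quadratic term `O(ε² s²)`; the integrand is at least `exp (β ε s⁴ / 2)` on a set of area one.
-/

open MeasureTheory Set Real

def coherentPhase (β lam μ t : ℝ) (p : ℝ × ℝ) : ℝ :=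
  β * ((μ - 1) * (p.1 ^ 2 + p.2 ^ 2) - lam * (p.1 ^ 2 + p.2 ^ 2) ^ 2 + 2 * t * p.1)

theorem continuous_coherentPhase (β lam μ t : ℝ) : Continuous (coherentPhase β lam μ t) := by
  unfold coherentPhase; fun_prop

theorem coherentPhase_le {β lam : ℝ} (hβ : 0 < β) (hlam : 0 < lam) (μ t : ℝ) (p : ℝ × ℝ) :
    coherentPhase β lam μ t p ≤
      β ^ 2 * t ^ 2 + (β * (μ - 1) + 2) ^ 2 / (4 * β * lam) - (p.1 ^ 2 + p.2 ^ 2) := by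
  set r := p.1 ^ 2 + p.2 ^ 2
  set K := β * (μ - 1) + 2
  have linear : 2 * β * t * p.1 ≤ β ^ 2 * t ^ 2 + r := by
    nlinarith [sq_nonneg (β * t - p.1), sq_nonneg p.2]
  have quadratic : K * r ≤ β * lam * r ^ 2 + K ^ 2 / (4 * β * lam) := by
    rw [← sub_le_iff_le_add', le_div_iff₀ (by positivity)]
    nlinarith [sq_nonneg (2 * β * lam * r - K)]
  unfold coherentPhase
  linarith

theorem integrable_exp_of_le_sub_sq {f : ℝ × ℝ → ℝ} (hf : Continuous f) (C : ℝ)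
    (hle : ∀ p, f p ≤ C - (p.1 ^ 2 + p.2 ^ 2)) : Integrable (fun p => exp (f p)) := by
  have gaussian : Integrable (fun x : ℝ => exp (-x ^ 2)) := by
    simpa using integrable_exp_neg_mul_sq (b := (1 : ℝ)) one_pos
  refine ((gaussian.mul_prod gaussian).const_mul (exp C)).mono'
    hf.rexp.aestronglyMeasurable (.of_forall fun p => ?_)
  rw [norm_of_nonneg (exp_pos _).le, ← exp_add, ← exp_add]
  exact exp_le_exp.2 (by linarith [hle p])

theorem le_log_integral_of_exp_le_on {α : Type*} [MeasurableSpace α] {μ : Measure α}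
    {f : α → ℝ} {S : Set α} {m : ℝ} (hS : MeasurableSet S) (hμS : μ S = 1)
    (hf : Integrable f μ) (hf0 : 0 ≤ᵐ[μ] f) (hle : ∀ x ∈ S, exp m ≤ f x) :
    m ≤ log (∫ x, f x ∂μ) := by
  have on_S : exp m ≤ ∫ x in S, f x ∂μ := by
    simpa [measureReal_def, hμS] using
      setIntegral_ge_of_const_le hS (by simp [hμS]) hle hf.integrableOn
  rw [← log_exp m]
  exact log_le_log (exp_pos m) (on_S.trans (setIntegral_le_integral hf hf0))

theorem volume_Icc_add_one_prod_Icc_zero_one (a : ℝ) :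
    volume (Icc a (a + 1) ×ˢ Icc (0 : ℝ) 1) = 1 := by
  rw [Measure.volume_eq_prod, Measure.prod_prod]
  simp

theorem sq_add_sq_le_of_mem_Icc {a x y : ℝ} (ha : 1 ≤ a) (hx : x ∈ Icc a (a + 1))
    (hy : y ∈ Icc (0 : ℝ) 1) : x ^ 2 + y ^ 2 ≤ 5 * a ^ 2 := by
  obtain ⟨hx₁, hx₂⟩ := hx
  obtain ⟨hy₁, hy₂⟩ := hy
  nlinarith

theorem le_coherentPhase_cube_of_mem_Icc_prod {β lam μ ε s : ℝ} (hβ : 0 ≤ β) (hlam : 0 ≤ lam)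
    (hε : 0 < ε) (hε₁ : ε ≤ 1) (hε₃ : 25 * lam * ε ^ 3 ≤ 1) (hs : 1 + 10 * |μ - 1| ≤ ε * s)
    {p : ℝ × ℝ}
    (hp : p ∈ Icc (ε * s) (ε * s + 1) ×ˢ Icc (0 : ℝ) 1) :
    β * ε / 2 * s ^ 4 ≤ coherentPhase β lam μ (s ^ 3) p := by
  obtain ⟨hx, hy⟩ := hp
  set M := |μ - 1|
  set a := ε * s
  set r := p.1 ^ 2 + p.2 ^ 2
  have hM : 0 ≤ M := abs_nonneg _
  have hs₁ : 1 ≤ s := by nlinarith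
  have hr₀ : 0 ≤ r := by positivity
  have hr : r ≤ 5 * a ^ 2 := sq_add_sq_le_of_mem_Icc (by linarith) hx hy
  have quadratic : -(5 * M * a ^ 2) ≤ (μ - 1) * r := by
    nlinarith [neg_abs_le (μ - 1)]
  have quartic : lam * r ^ 2 ≤ 25 * lam * ε ^ 4 * s ^ 4 := by
    have := mul_le_mul_of_nonneg_left (pow_le_pow_left₀ hr₀ hr 2) hlam
    linarith [show lam * (5 * a ^ 2) ^ 2 = 25 * lam * ε ^ 4 * s ^ 4 by ring]
  have linear : 2 * ε * s ^ 4 ≤ 2 * s ^ 3 * p.1 := by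
    have := mul_le_mul_of_nonneg_left hx.1 (by positivity : (0 : ℝ) ≤ 2 * s ^ 3)
    linarith [show 2 * s ^ 3 * a = 2 * ε * s ^ 4 by ring]
  have quartic_small : 25 * lam * ε ^ 4 * s ^ 4 ≤ ε * s ^ 4 := by
    nlinarith [mul_le_mul_of_nonneg_right hε₃ (by positivity : (0 : ℝ) ≤ ε * s ^ 4)]
  have quadratic_small : 5 * M * a ^ 2 ≤ ε / 2 * s ^ 4 := by
    have h₁ : 10 * M * (ε ^ 2 * s ^ 2) ≤ ε * s * (ε ^ 2 * s ^ 2) :=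
      mul_le_mul_of_nonneg_right (by linarith) (by positivity)
    have h₂ : ε ^ 3 * s ^ 3 ≤ ε * s ^ 4 := by
      have : ε ^ 2 * s ^ 3 ≤ 1 * s ^ 4 := by gcongr <;> nlinarith
      nlinarith
    nlinarith
  unfold coherentPhase
  nlinarith

theorem exists_pos_le_one_mul_cube_le_one {k : ℝ} (hk : 0 < k) :
    ∃ ε : ℝ, 0 < ε ∧ ε ≤ 1 ∧ k * ε ^ 3 ≤ 1 := by
  set ε := min 1 k⁻¹
  have hε : 0 < ε := by positivity
  refine ⟨ε, hε, min_le_left _ _, ?_⟩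
  calc k * ε ^ 3 ≤ k * ε := by gcongr; exact pow_le_of_le_one hε.le (min_le_left _ _) (by norm_num)
    _ ≤ k * k⁻¹ := by gcongr; exact min_le_right _ _
    _ = 1 := mul_inv_cancel₀ hk.ne'

theorem forall_mul_rpow_four_thirds_le_of_forall_cube {L : ℝ → ℝ} {q c : ℝ} (hq : 0 ≤ q)
    (h : ∀ s, q ≤ s → c * s ^ 4 ≤ L (s ^ 3)) :
    ∀ t, q ^ 3 ≤ t → c * t ^ ((4 : ℝ) / 3) ≤ L t := by
  intro t ht
  have ht₀ : 0 ≤ t := (pow_nonneg hq 3).trans ht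
  set s := t ^ ((1 : ℝ) / 3)
  have hs₀ : 0 ≤ s := rpow_nonneg ht₀ _
  have hts : s ^ 3 = t := by
    rw [← rpow_natCast, ← rpow_mul ht₀]; norm_num
  have ht₄ : t ^ ((4 : ℝ) / 3) = s ^ 4 := by
    rw [← rpow_natCast, ← rpow_mul ht₀]; norm_num
  rw [ht₄, ← hts]
  exact h s ((pow_le_pow_iff_left₀ hq hs₀ (by norm_num)).1 (hts ▸ ht))

/-- **Lower bound half of the growth estimate `p̃(ν) ∼ |ν|^{4/3}`** (Lemma 5(ii)),
via the Berezin–Lieb inequality on coherent states. For `β > 0`, `λ > 0`, `μ ∈ ℝ`: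
(i) for every `t` the function
`(x, y) ↦ exp(β((μ−1)(x²+y²) − λ(x²+y²)² + 2tx))` is integrable on `ℝ²`, and
(ii) there are `c > 0` and `T ≥ 1` with
`log ∫ exp(β((μ−1)(x²+y²) − λ(x²+y²)² + 2tx)) ≥ c t^{4/3}` for all `t ≥ T`. -/
theorem log_coherent_state_integral_lower_bound (β lam μ : ℝ) (hβ : 0 < β) (hlam : 0 < lam) :
    (∀ t : ℝ, Integrable (fun p : ℝ × ℝ =>
      Real.exp (β * ((μ - 1) * (p.1 ^ 2 + p.2 ^ 2) - lam * (p.1 ^ 2 + p.2 ^ 2) ^ 2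
        + 2 * t * p.1))) volume) ∧
    (∃ c : ℝ, 0 < c ∧ ∃ T : ℝ, 1 ≤ T ∧ ∀ t : ℝ, T ≤ t →
      c * t ^ ((4 : ℝ) / 3) ≤
        Real.log (∫ p : ℝ × ℝ,
          Real.exp (β * ((μ - 1) * (p.1 ^ 2 + p.2 ^ 2) - lam * (p.1 ^ 2 + p.2 ^ 2) ^ 2
            + 2 * t * p.1)))) := by
  have integrable (t : ℝ) : Integrable (fun p => exp (coherentPhase β lam μ t p)) :=
    integrable_exp_of_le_sub_sq (continuous_coherentPhase β lam μ t) _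
      (coherentPhase_le hβ hlam μ t)
  refine ⟨integrable, ?_⟩
  obtain ⟨ε, hε, hε₁, hε₃⟩ := exists_pos_le_one_mul_cube_le_one (by positivity : 0 < 25 * lam)
  set q := (1 + 10 * |μ - 1|) / ε
  have hq : 1 ≤ q := by
    rw [le_div_iff₀ hε]; linarith [abs_nonneg (μ - 1)]
  refine ⟨β * ε / 2, by positivity, q ^ 3, one_le_pow₀ hq,
    forall_mul_rpow_four_thirds_le_of_forall_cube (by linarith) fun s hs => ?_⟩
  have hεs : 1 + 10 * |μ - 1| ≤ ε * s := by
    rw [div_le_iff₀ hε] at hs; linarith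
  exact le_log_integral_of_exp_le_on (measurableSet_Icc.prod measurableSet_Icc)
    (volume_Icc_add_one_prod_Icc_zero_one (ε * s)) (integrable (s ^ 3))
    (.of_forall fun _ => (exp_pos _).le)
    fun p hp => exp_le_exp.2 <|
      le_coherentPhase_cube_of_mem_Icc_prod hβ.le hlam.le hε hε₁ hε₃ hεs hp
end

section
/- Let p : ℝ → ℝ be convex, differentiable, nondecreasing on [0, ∞), and suppose there is C > 0 with p(r) ≤ C·(1 + r^{4/3}) for all r ≥ 0. Define I : [0, ∞) → ℝ ∪ {+∞} by I(x) = sup_{r ≥ 0} {2·r·x − p(r)} + p(0), the supremum taken in the extended reals. Then sup_{x ≥ 0} {x² − I(x)} + p(0) = sup_{r ≥ 0} {−r² + p(r)}, and the right-hand supremum is finite and attained at some r₀ ≥ 0. (This is the reduction, carried out at the end of Section 2 of the paper, of the variational formula of Theorem 4 for the pressure of the long-range-hopping Bose–Hubbard model to the closed formula p(β, μ, λ) = sup_{r ≥ 0} {−r² + p(r)} of equation (1.3).) -/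
open Set Filter Topology

/-!
Let `r₀` maximise `F r = -r² + p r` on `[0, ∞)`; it exists because the growth bound forces
`F → -∞`. The line of slope `2 r₀` through `(r₀, p r₀)` supports `p` on `[0, ∞)` (it is the
tangent line by convexity when `r₀ > 0`, and horizontal by monotonicity when `r₀ = 0`), so the
supremum defining `I r₀` is attained at `r = r₀`. Taking `r = x` in the supremum defining `I x`
gives `x² - I x ≤ F x - p 0 ≤ F r₀ - p 0`, with equality at `x = r₀`.
-/

theorem IsMaxOn.biSup_eq {α β : Type*} [CompleteLattice α] {f : β → α} {s : Set β} {x₀ : β}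
    (hx₀ : x₀ ∈ s) (h : IsMaxOn f s x₀) : ⨆ x ∈ s, f x = f x₀ :=
  le_antisymm (iSup₂_le fun _ hx => h hx) (le_iSup₂_of_le x₀ hx₀ le_rfl)

theorem exists_isMaxOn_Ici_of_tendsto_atBot {f : ℝ → ℝ} {a : ℝ} (hf : ContinuousOn f (Ici a))
    (htop : Tendsto f atTop atBot) : ∃ x ∈ Ici a, IsMaxOn f (Ici a) x := by
  refine hf.exists_isMaxOn' isClosed_Ici self_mem_Ici ?_
  rw [cocompact_eq_atBot_atTop, inf_sup_right, (disjoint_atBot_principal_Ici a).eq_bot,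
    bot_sup_eq]
  exact (htop.eventually (eventually_le_atBot (f a))).filter_mono inf_le_left

theorem ConvexOn.add_deriv_mul_sub_le {S : Set ℝ} {f : ℝ → ℝ} {x y : ℝ} (hf : ConvexOn ℝ S f)
    (hx : x ∈ S) (hy : y ∈ S) (hd : DifferentiableAt ℝ f x) :
    f x + deriv f x * (y - x) ≤ f y := by
  rcases lt_trichotomy x y with hxy | rfl | hyx
  · have h := hf.deriv_le_slope hx hy hxy hd
    rw [slope_def_field, le_div_iff₀ (sub_pos.2 hxy)] at h
    linarith
  · simp
  · have h := hf.slope_le_deriv hy hx hyx hd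
    rw [slope_def_field, div_le_iff₀ (sub_pos.2 hyx)] at h
    linarith

theorem tendsto_neg_sq_add_const_mul_one_add_rpow_atBot (C : ℝ) {s : ℝ} (hs : s < 2) :
    Tendsto (fun r : ℝ => -r ^ 2 + C * (1 + r ^ s)) atTop atBot := by
  have hsmall : Tendsto (fun r : ℝ => C * r ^ (s - 2) - 1) atTop (𝓝 (-1)) := by
    simpa [neg_sub] using
      ((tendsto_rpow_neg_atTop (sub_pos.2 hs)).const_mul C).sub_const 1
  have hprod := (tendsto_pow_atTop (α := ℝ) two_ne_zero).atTop_mul_neg (by norm_num) hsmall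
  refine (tendsto_atBot_add_const_right _ C hprod).congr' ?_
  filter_upwards [eventually_gt_atTop 0] with r hr
  have hsplit : r ^ 2 * r ^ (s - 2) = r ^ s := by
    rw [← Real.rpow_natCast, ← Real.rpow_add hr]
    norm_num
  linear_combination C * hsplit

theorem tendsto_neg_sq_add_atBot_of_le_rpow {p : ℝ → ℝ} {C s : ℝ} (hs : s < 2)
    (hgrowth : ∀ r : ℝ, 0 ≤ r → p r ≤ C * (1 + r ^ s)) :
    Tendsto (fun r : ℝ => -r ^ 2 + p r) atTop atBot := by
  refine tendsto_atBot_mono' _ ?_ (tendsto_neg_sq_add_const_mul_one_add_rpow_atBot C hs)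
  filter_upwards [eventually_ge_atTop 0] with r hr
  linarith [hgrowth r hr]

theorem isMaxOn_two_mul_sub_of_isMaxOn_neg_sq_add {p : ℝ → ℝ} {r₀ : ℝ}
    (hconv : ConvexOn ℝ (Ici 0) p) (hdiff : DifferentiableAt ℝ p r₀)
    (hmono : MonotoneOn p (Ici 0)) (hr₀ : 0 ≤ r₀)
    (hmax : IsMaxOn (fun r => -r ^ 2 + p r) (Ici 0) r₀) :
    IsMaxOn (fun r => 2 * r * r₀ - p r) (Ici 0) r₀ := by
  rcases hr₀.eq_or_lt with rfl | hpos
  · intro r hr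
    simpa using hmono self_mem_Ici hr hr
  · have hderiv : deriv p r₀ = 2 * r₀ := by
      have := (hmax.isLocalMax (Ici_mem_nhds hpos)).hasDerivAt_eq_zero
        ((hasDerivAt_pow 2 r₀).neg.add hdiff.hasDerivAt)
      norm_num at this
      linarith
    intro r hr
    have := hconv.add_deriv_mul_sub_le (le_of_lt hpos) hr hdiff
    rw [hderiv] at this
    show 2 * r * r₀ - p r ≤ 2 * r₀ * r₀ - p r₀
    linarith

theorem biSup_sq_sub_add_eq_of_isMaxOn {p : ℝ → ℝ} {I : ℝ → EReal}
    (hI : ∀ x : ℝ, I x =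
      (⨆ r ∈ Ici (0 : ℝ), ((2 * r * x - p r : ℝ) : EReal)) + ((p 0 : ℝ) : EReal))
    {r₀ : ℝ} (hr₀ : r₀ ∈ Ici 0) (hmax : IsMaxOn (fun r => -r ^ 2 + p r) (Ici 0) r₀)
    (hlegendre : IsMaxOn (fun r => 2 * r * r₀ - p r) (Ici 0) r₀) :
    (⨆ x ∈ Ici (0 : ℝ), (((x ^ 2 : ℝ) : EReal) - I x)) + ((p 0 : ℝ) : EReal)
      = ((-r₀ ^ 2 + p r₀ : ℝ) : EReal) := by
  have hI_ge (x : ℝ) (hx : x ∈ Ici 0) : ((2 * x * x - p x + p 0 : ℝ) : EReal) ≤ I x := by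
    rw [hI, EReal.coe_add]
    gcongr
    exact le_iSup₂_of_le (f := fun r _ => ((2 * r * x - p r : ℝ) : EReal)) x hx le_rfl
  have hI_r₀ : I r₀ = ((2 * r₀ * r₀ - p r₀ + p 0 : ℝ) : EReal) := by
    have hsup :
        ⨆ r ∈ Ici 0, ((2 * r * r₀ - p r : ℝ) : EReal) = ((2 * r₀ * r₀ - p r₀ : ℝ) : EReal) :=
      (hlegendre.comp_mono EReal.coe_strictMono.monotone).biSup_eq hr₀
    rw [hI, hsup, EReal.coe_add]
  have hobjective : IsMaxOn (fun x => ((x ^ 2 : ℝ) : EReal) - I x) (Ici 0) r₀ := by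
    intro x hx
    have hF : -x ^ 2 + p x ≤ -r₀ ^ 2 + p r₀ := hmax hx
    calc ((x ^ 2 : ℝ) : EReal) - I x
        ≤ ((x ^ 2 - (2 * x * x - p x + p 0) : ℝ) : EReal) := by
          rw [EReal.coe_sub]; exact EReal.sub_le_sub le_rfl (hI_ge x hx)
      _ ≤ ((r₀ ^ 2 - (2 * r₀ * r₀ - p r₀ + p 0) : ℝ) : EReal) :=
          EReal.coe_le_coe_iff.2 (by linarith)
      _ = ((r₀ ^ 2 : ℝ) : EReal) - I r₀ := by rw [hI_r₀, EReal.coe_sub]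
  rw [hobjective.biSup_eq hr₀, hI_r₀, ← EReal.coe_sub, ← EReal.coe_add]
  norm_cast
  ring

theorem pressure_reduction_general (p : ℝ → ℝ) (hconv : ConvexOn ℝ Set.univ p)
    (hdiff : Differentiable ℝ p) (hmono : MonotoneOn p (Set.Ici (0 : ℝ)))
    (C : ℝ) (hgrowth : ∀ r : ℝ, 0 ≤ r → p r ≤ C * (1 + r ^ ((4 : ℝ) / 3)))
    (I : ℝ → EReal)
    (hI : ∀ x : ℝ, I x =
      (⨆ r ∈ Set.Ici (0 : ℝ), ((2 * r * x - p r : ℝ) : EReal)) + ((p 0 : ℝ) : EReal)) :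
    ∃ r₀ : ℝ, 0 ≤ r₀ ∧ (∀ r : ℝ, 0 ≤ r → -r ^ 2 + p r ≤ -r₀ ^ 2 + p r₀) ∧
      (⨆ x ∈ Set.Ici (0 : ℝ), (((x ^ 2 : ℝ) : EReal) - I x)) + ((p 0 : ℝ) : EReal)
        = ((-r₀ ^ 2 + p r₀ : ℝ) : EReal) := by
  obtain ⟨r₀, hr₀, hmax⟩ : ∃ r₀ ∈ Ici 0, IsMaxOn (fun r => -r ^ 2 + p r) (Ici 0) r₀ :=
    exists_isMaxOn_Ici_of_tendsto_atBot
      ((continuous_pow 2).neg.add hdiff.continuous).continuousOn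
      (tendsto_neg_sq_add_atBot_of_le_rpow (by norm_num) hgrowth)
  have hlegendre := isMaxOn_two_mul_sub_of_isMaxOn_neg_sq_add
    (hconv.subset (subset_univ _) (convex_Ici 0)) (hdiff r₀) hmono hr₀ hmax
  exact ⟨r₀, hr₀, fun r hr => hmax hr, biSup_sq_sub_add_eq_of_isMaxOn hI hr₀ hmax hlegendre⟩

/-- **Reduction of the variational formula to the closed formula (1.3)**
(end of Section 2). Let `p : ℝ → ℝ` be convex, differentiable, nondecreasing on `[0,∞)`,
with `p(r) ≤ C(1 + r^{4/3})` for `r ≥ 0`. Define, in the extended reals,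
`I(x) = sup_{r ≥ 0} {2rx − p(r)} + p(0)`. Then
`sup_{x ≥ 0} {x² − I(x)} + p(0) = sup_{r ≥ 0} {−r² + p(r)}`, the right-hand supremum
being finite and attained at some `r₀ ≥ 0`. -/
theorem pressure_reduction (p : ℝ → ℝ) (hconv : ConvexOn ℝ Set.univ p)
    (hdiff : Differentiable ℝ p) (hmono : MonotoneOn p (Set.Ici (0 : ℝ)))
    (C : ℝ) (hC : 0 < C) (hgrowth : ∀ r : ℝ, 0 ≤ r → p r ≤ C * (1 + r ^ ((4 : ℝ) / 3)))
    (I : ℝ → EReal)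
    (hI : ∀ x : ℝ, I x =
      (⨆ r ∈ Set.Ici (0 : ℝ), ((2 * r * x - p r : ℝ) : EReal)) + ((p 0 : ℝ) : EReal)) :
    ∃ r₀ : ℝ, 0 ≤ r₀ ∧ (∀ r : ℝ, 0 ≤ r → -r ^ 2 + p r ≤ -r₀ ^ 2 + p r₀) ∧
      (⨆ x ∈ Set.Ici (0 : ℝ), (((x ^ 2 : ℝ) : EReal) - I x)) + ((p 0 : ℝ) : EReal)
        = ((-r₀ ^ 2 + p r₀ : ℝ) : EReal) :=
  pressure_reduction_general p hconv hdiff hmono C hgrowth I hI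
end

section
/- Let n ≥ 1, let H be an n×n Hermitian complex matrix, and set σ = Matrix.exp H / Re (Matrix.trace (Matrix.exp H)). Then for every positive definite Hermitian n×n matrix ρ with trace 1, the quantum relative entropy satisfies the Gibbs variational principle: S(ρ‖σ) = sup { Re (Matrix.trace (ρ * A)) − Real.log (Re (Matrix.trace (Matrix.exp (H + A)))) : A an n×n Hermitian matrix } + Real.log (Re (Matrix.trace (Matrix.exp H))). (This is the finite-dimensional version of the paper's Theorem 2: S(φ_V‖ω_V) = sup_{A=A*} {β φ_V(A) − ln Tr e^{β(μN − Σ h_x + A)}} + V ln Tr e^{β(μ n₁ − h₁)}, with β absorbed into H and A.) -/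
open scoped ComplexOrder

/-- The matrix logarithm of a Hermitian complex matrix, defined through the continuous
functional calculus: apply `Real.log` to the eigenvalues in a spectral decomposition
(junk value `0` for non-Hermitian matrices). -/
noncomputable def matLog {n : ℕ} (M : Matrix (Fin n) (Fin n) ℂ) :
    Matrix (Fin n) (Fin n) ℂ :=
  if hM : M.IsHermitian then
    (hM.eigenvectorUnitary : Matrix (Fin n) (Fin n) ℂ) *
      Matrix.diagonal (fun i => (Real.log (hM.eigenvalues i) : ℂ)) *
      star (hM.eigenvectorUnitary : Matrix (Fin n) (Fin n) ℂ)
  else 0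

/-- The quantum relative entropy `S(ρ‖σ) = Re (Tr (ρ (log ρ − log σ)))` of two density
matrices. -/
noncomputable def relEnt {n : ℕ} (ρ σ : Matrix (Fin n) (Fin n) ℂ) : ℝ :=
  (Matrix.trace (ρ * (matLog ρ - matLog σ))).re

/-!
Through the continuous functional calculus, `log σ = H - log Z` with `Z = Tr e^H`, so the claim
is that `Tr ρ log ρ - Tr ρ H` is the largest value of `Tr ρ A - log Tr e^(H + A)`; it is attained
at `A = log ρ - H`. For the bound put `B = H + A` and write `ρ = ∑ pᵢ uᵢ uᵢ*` with orthonormal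
`uᵢ`. With `xᵢ = ⟨uᵢ, B uᵢ⟩`, Peierls' inequality `∑ e^xᵢ ≤ Tr e^B` (Jensen for `exp`, the
weights being the squared moduli of a row of a unitary matrix) and the classical Gibbs inequality
`∑ pᵢ xᵢ - log ∑ e^xᵢ ≤ ∑ pᵢ log pᵢ` give `Tr ρ B - log Tr e^B ≤ Tr ρ log ρ`.
-/

-- The L² operator norm makes `Matrix ι ι ℂ` a C⋆-algebra, so that `CFC.log` is available;
-- `CFC.exp_log` needs the Loewner order.
open scoped Matrix.Norms.L2Operator MatrixOrder

open Finset Matrix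

theorem Real.sum_mul_sub_log_sum_exp_le {ι : Type*} [Fintype ι] (p x : ι → ℝ)
    (hp : ∀ i, 0 < p i) (hp1 : ∑ i, p i = 1) :
    ∑ i, p i * x i - Real.log (∑ i, Real.exp (x i)) ≤ ∑ i, p i * Real.log (p i) := by
  have jensen := strictConcaveOn_log_Ioi.concaveOn.le_map_sum (t := univ) (w := p)
    (p := fun i => Real.exp (x i) / p i) (fun i _ => (hp i).le) hp1
    (fun i _ => div_pos (Real.exp_pos _) (hp i))
  have hsum : ∑ i, p i * (Real.exp (x i) / p i) = ∑ i, Real.exp (x i) :=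
    sum_congr rfl fun i _ => mul_div_cancel₀ _ (hp i).ne'
  have hlog : ∀ i, p i * Real.log (Real.exp (x i) / p i) = p i * x i - p i * Real.log (p i) :=
    fun i => by rw [Real.log_div (Real.exp_ne_zero _) (hp i).ne', Real.log_exp, mul_sub]
  simp only [smul_eq_mul, hsum, hlog, sum_sub_distrib] at jensen
  linarith

namespace Matrix

variable {ι : Type*} [Fintype ι] [DecidableEq ι]

section RCLike

variable {𝕜 : Type*} [RCLike 𝕜]

theorem sum_norm_sq_apply_of_mem_unitaryGroup {U : Matrix ι ι 𝕜}
    (hU : U ∈ unitaryGroup ι 𝕜) (i : ι) : ∑ j, ‖U i j‖ ^ 2 = 1 := by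
  have h := congrFun (congrFun (mem_unitaryGroup_iff.mp hU) i) i
  simp only [mul_apply, star_apply, RCLike.star_def, RCLike.mul_conj, one_apply_eq] at h
  exact_mod_cast h

theorem mul_diagonal_mul_star_apply_self (U : Matrix ι ι 𝕜) (d : ι → ℝ) (i : ι) :
    (U * diagonal (fun j => (d j : 𝕜)) * star U) i i = ∑ j, ((‖U i j‖ ^ 2 * d j : ℝ) : 𝕜) := by
  rw [mul_apply]
  simp only [mul_diagonal, star_apply, RCLike.star_def]
  refine sum_congr rfl fun j _ => ?_
  push_cast
  rw [← RCLike.mul_conj]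
  ring

theorem _root_.ConvexOn.map_re_mul_diagonal_mul_star_apply_self_le {f : ℝ → ℝ}
    (hf : ConvexOn ℝ Set.univ f) {U : Matrix ι ι 𝕜} (hU : U ∈ unitaryGroup ι 𝕜) (d : ι → ℝ)
    (i : ι) :
    f (RCLike.re ((U * diagonal (fun j => (d j : 𝕜)) * star U) i i))
      ≤ RCLike.re ((U * diagonal (fun j => (f (d j) : 𝕜)) * star U) i i) := by
  simp only [mul_diagonal_mul_star_apply_self, map_sum, RCLike.ofReal_re]
  exact hf.map_sum_le (fun j _ => sq_nonneg _) (sum_norm_sq_apply_of_mem_unitaryGroup hU i)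
    (fun _ _ => Set.mem_univ _)

/-- Peierls' inequality, in the orthonormal basis formed by the columns of `U`. -/
theorem IsHermitian.sum_map_re_diag_le_re_trace_cfc {A : Matrix ι ι 𝕜} (hA : A.IsHermitian)
    {f : ℝ → ℝ} (hf : ConvexOn ℝ Set.univ f) {U : Matrix ι ι 𝕜} (hU : U ∈ unitaryGroup ι 𝕜) :
    ∑ i, f (RCLike.re ((star U * A * U) i i)) ≤ RCLike.re (trace (cfc f A)) := by
  set W := star U * (hA.eigenvectorUnitary : Matrix ι ι 𝕜)
  have hW : W ∈ unitaryGroup ι 𝕜 := mul_mem (Unitary.star_mem hU) hA.eigenvectorUnitary.2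
  have hconj : ∀ g : ℝ → ℝ, star U * cfc g A * U
      = W * diagonal (fun j => (g (hA.eigenvalues j) : 𝕜)) * star W := fun g => by
    rw [hA.cfc_eq, IsHermitian.cfc, Unitary.conjStarAlgAut_apply]
    simp only [W, star_mul, star_star, Matrix.mul_assoc, Function.comp_def]
  calc ∑ i, f (RCLike.re ((star U * A * U) i i))
      = ∑ i, f (RCLike.re ((star U * cfc (id : ℝ → ℝ) A * U) i i)) := by rw [cfc_id ℝ A]
    _ ≤ ∑ i, RCLike.re ((star U * cfc f A * U) i i) := by
      simp only [hconj]
      exact sum_le_sum fun i _ => hf.map_re_mul_diagonal_mul_star_apply_self_le hW _ i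
    _ = RCLike.re (trace (star U * cfc f A * U)) := by simp only [trace, diag_apply, map_sum]
    _ = RCLike.re (trace (cfc f A)) := by
      rw [trace_mul_cycle, mem_unitaryGroup_iff.mp hU, Matrix.one_mul]

theorem IsHermitian.trace_mul_eq_sum_eigenvalues_mul {A : Matrix ι ι 𝕜} (hA : A.IsHermitian)
    (B : Matrix ι ι 𝕜) :
    trace (A * B) = ∑ i, (hA.eigenvalues i : 𝕜) *
      (star (hA.eigenvectorUnitary : Matrix ι ι 𝕜) * B * hA.eigenvectorUnitary) i i := by
  conv_lhs => rw [hA.spectral_theorem, Unitary.conjStarAlgAut_apply]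
  rw [Matrix.mul_assoc, trace_mul_comm, Matrix.mul_assoc, Matrix.mul_assoc, trace]
  simp only [diag_apply, mul_diagonal, ← Matrix.mul_assoc, Function.comp_apply, mul_comm]

end RCLike

theorem PosDef.re_trace_mul_sub_log_re_trace_exp_le {ρ : Matrix ι ι ℂ} (hρ : ρ.PosDef)
    (htr : trace ρ = 1) {B : Matrix ι ι ℂ} (hB : B.IsHermitian) :
    (trace (ρ * B)).re - Real.log (trace (NormedSpace.exp B)).re
      ≤ (trace (ρ * CFC.log ρ)).re := by
  set U := (hρ.1.eigenvectorUnitary : Matrix ι ι ℂ)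
  set p := hρ.1.eigenvalues
  set x := fun i => ((star U * B * U) i i).re
  have hp1 : ∑ i, p i = 1 := by
    simpa using congrArg Complex.re (hρ.1.trace_eq_sum_eigenvalues.symm.trans htr)
  have hρB : (trace (ρ * B)).re = ∑ i, p i * x i := by
    rw [hρ.1.trace_mul_eq_sum_eigenvalues_mul, Complex.re_sum]
    exact sum_congr rfl fun i _ => Complex.re_ofReal_mul _ _
  have hρlogρ : (trace (ρ * CFC.log ρ)).re = ∑ i, p i * Real.log (p i) := by
    rw [hρ.1.trace_mul_eq_sum_eigenvalues_mul, CFC.log, hρ.1.cfc_eq, IsHermitian.cfc,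
      Unitary.conjStarAlgAut_apply]
    simp [Matrix.mul_assoc, ← Matrix.mul_assoc (star U) U, U, p]
  have hpeierls : ∑ i, Real.exp (x i) ≤ (trace (NormedSpace.exp B)).re := by
    rw [← CFC.real_exp_eq_normedSpace_exp hB.isSelfAdjoint]
    exact hB.sum_map_re_diag_le_re_trace_cfc convexOn_exp hρ.1.eigenvectorUnitary.2
  obtain ⟨i₀, -⟩ := exists_ne_zero_of_sum_ne_zero (hp1 ▸ one_ne_zero : ∑ i, p i ≠ 0)
  have hlog := Real.log_le_log (sum_pos (fun i _ => Real.exp_pos (x i)) ⟨i₀, mem_univ _⟩)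
    hpeierls
  linarith [Real.sum_mul_sub_log_sum_exp_le p x hρ.eigenvalues_pos hp1]

theorem PosDef.isGreatest_re_trace_mul_sub_log_re_trace_exp_add {ρ : Matrix ι ι ℂ}
    (hρ : ρ.PosDef) (htr : trace ρ = 1) {H : Matrix ι ι ℂ} (hH : H.IsHermitian) :
    IsGreatest {x : ℝ | ∃ A : Matrix ι ι ℂ, A.IsHermitian ∧
        x = (trace (ρ * A)).re - Real.log (trace (NormedSpace.exp (H + A))).re}
      ((trace (ρ * CFC.log ρ)).re - (trace (ρ * H)).re) := by
  refine ⟨⟨CFC.log ρ - H, IsSelfAdjoint.log.isHermitian.sub hH, ?_⟩, ?_⟩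
  · rw [add_sub_cancel, CFC.exp_log ρ hρ.isStrictlyPositive, htr, Matrix.mul_sub, trace_sub,
      Complex.sub_re]
    simp
  · rintro _ ⟨A, hA, rfl⟩
    have := hρ.re_trace_mul_sub_log_re_trace_exp_le htr (hH.add hA)
    rw [Matrix.mul_add, trace_add, Complex.add_re] at this
    linarith

theorem IsHermitian.posDef_exp {H : Matrix ι ι ℂ} (hH : H.IsHermitian) :
    (NormedSpace.exp H).PosDef :=
  ((Matrix.isUnit_exp H).isStrictlyPositive hH.isSelfAdjoint.exp_nonneg).posDef

theorem IsHermitian.log_smul_exp {H : Matrix ι ι ℂ} (hH : H.IsHermitian) {c : ℝ} (hc : 0 < c) :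
    CFC.log (c • NormedSpace.exp H) = algebraMap ℝ _ (Real.log c) + H := by
  rw [CFC.log_smul' _ hc hH.posDef_exp.isStrictlyPositive, CFC.log_exp H hH.isSelfAdjoint]

end Matrix

theorem matLog_eq_log {n : ℕ} {M : Matrix (Fin n) (Fin n) ℂ} (hM : M.IsHermitian) :
    matLog M = CFC.log M := by
  rw [matLog, dif_pos hM, CFC.log, hM.cfc_eq, Matrix.IsHermitian.cfc,
    Unitary.conjStarAlgAut_apply]
  rfl

/-- **Gibbs variational principle for the quantum relative entropy** (the
finite-dimensional version of Theorem 2): for a Hermitian `H`, the Gibbs state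
`σ = exp H / Re (Tr (exp H))` and any positive definite density matrix `ρ`,
`S(ρ‖σ) = sup_{A = A*} { Re (Tr (ρ A)) − log (Re (Tr (exp (H + A)))) } + log (Re (Tr (exp H)))`. -/
theorem relEnt_gibbs_variational {n : ℕ} (hn : 1 ≤ n)
    (H : Matrix (Fin n) (Fin n) ℂ) (hH : H.IsHermitian)
    (σ : Matrix (Fin n) (Fin n) ℂ)
    (hσ : σ = ((Matrix.trace (NormedSpace.exp H)).re)⁻¹ • NormedSpace.exp H)
    (ρ : Matrix (Fin n) (Fin n) ℂ) (hρ : ρ.PosDef) (hρtr : Matrix.trace ρ = 1) :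
    relEnt ρ σ =
      sSup {x : ℝ | ∃ A : Matrix (Fin n) (Fin n) ℂ, A.IsHermitian ∧
          x = (Matrix.trace (ρ * A)).re
            - Real.log ((Matrix.trace (NormedSpace.exp (H + A))).re)}
        + Real.log ((Matrix.trace (NormedSpace.exp H)).re) := by
  have : Nonempty (Fin n) := ⟨⟨0, hn⟩⟩
  set Z := (trace (NormedSpace.exp H)).re
  have hZinv : 0 < Z⁻¹ := inv_pos.mpr (Complex.pos_iff.mp hH.posDef_exp.trace_pos).1
  have hlogσ : matLog σ = H - algebraMap ℝ _ (Real.log Z) := by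
    rw [hσ, matLog_eq_log ((IsSelfAdjoint.all _).smul hH.posDef_exp.1.isSelfAdjoint),
      hH.log_smul_exp hZinv, Real.log_inv, map_neg, neg_add_eq_sub]
  rw [relEnt, (hρ.isGreatest_re_trace_mul_sub_log_re_trace_exp_add hρtr hH).csSup_eq,
    matLog_eq_log hρ.1, hlogσ]
  simp only [Algebra.algebraMap_eq_smul_one, Matrix.mul_sub, Algebra.mul_smul_comm, mul_one,
    trace_sub, trace_smul, hρtr, Complex.real_smul, Complex.sub_re, Complex.ofReal_re]
  ring
end

section
/- Let n ≥ 1 and let ρ and σ be n×n positive definite Hermitian complex matrices, each of trace 1. Then the quantum relative entropy is nonnegative: S(ρ‖σ) = Re (Matrix.trace (ρ * (log ρ − log σ))) ≥ 0. (This positivity of the relative entropy is the key inequality used in the first half of the proof of the paper's Theorem 2, where it is derived from ln λ ≤ λ − 1 via the spectral resolution of the relative modular operator.) -/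
open scoped ComplexOrder

/-! Diagonalise `ρ = U diag(p) U*` and `σ = V diag(q) V*`. The squared moduli `|W i j|²` of the
entries of the unitary `W = U* V` form a doubly stochastic matrix, and
`S(ρ‖σ) = ∑ i j, |W i j|² p i (log p i - log q j)`. Termwise `p (log p - log q) ≥ p - q`
(this is `log x ≤ x - 1`), and `∑ i j, |W i j|² (p i - q j) = Tr ρ - Tr σ = 0`. -/

open Matrix

lemma Real.sub_le_mul_log_sub_log {p q : ℝ} (hp : 0 < p) (hq : 0 < q) :
    p - q ≤ p * (Real.log p - Real.log q) := by
  have h := Real.one_sub_inv_le_log_of_pos (div_pos hp hq)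
  rw [Real.log_div hp.ne' hq.ne', inv_div] at h
  have := mul_le_mul_of_nonneg_left h hp.le
  rwa [mul_sub, mul_one, mul_div_cancel₀ _ hp.ne'] at this

namespace Matrix

variable {ι : Type*} [Fintype ι]

lemma trace_conj_mul_conj {R : Type*} [CommSemiring R] [StarRing R] (U V A B : Matrix ι ι R) :
    trace (U * A * star U * (V * B * star V)) =
      trace (A * (star U * V) * B * star (star U * V)) := by
  simp only [star_mul, star_star, mul_assoc]
  rw [trace_mul_comm]
  simp only [mul_assoc]

lemma trace_diagonal_mul_mul_diagonal_mul_star [DecidableEq ι] (W : Matrix ι ι ℂ)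
    (d e : ι → ℝ) :
    trace (diagonal (fun i => (d i : ℂ)) * W * diagonal (fun j => (e j : ℂ)) * star W) =
      ((∑ i, ∑ j, Complex.normSq (W i j) * (d i * e j) : ℝ) : ℂ) := by
  push_cast
  refine Finset.sum_congr rfl fun i _ => ?_
  rw [diag, mul_apply]
  refine Finset.sum_congr rfl fun j _ => ?_
  rw [mul_diagonal, diagonal_mul, star_apply, RCLike.star_def, ← Complex.mul_conj]
  ring

lemma normSq_mem_doublyStochastic_of_mem_unitaryGroup [DecidableEq ι] {W : Matrix ι ι ℂ}
    (hW : W ∈ unitaryGroup ι ℂ) :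
    of (fun i j => Complex.normSq (W i j)) ∈ doublyStochastic ℝ ι := by
  refine mem_doublyStochastic_iff_sum.mpr
    ⟨fun i j => Complex.normSq_nonneg _, fun i => ?_, fun j => ?_⟩
  · have h := congr_fun₂ ((mem_unitaryGroup_iff).mp hW) i i
    simp only [mul_apply, star_apply, RCLike.star_def, Complex.mul_conj, one_apply_eq] at h
    exact_mod_cast h
  · have h := congr_fun₂ ((mem_unitaryGroup_iff').mp hW) j j
    simp only [mul_apply, star_apply, RCLike.star_def, one_apply_eq, mul_comm (starRingEnd ℂ _),
      Complex.mul_conj] at h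
    exact_mod_cast h

theorem sum_mul_log_le_of_mem_doublyStochastic [DecidableEq ι] {M : Matrix ι ι ℝ}
    (hM : M ∈ doublyStochastic ℝ ι) {p q : ι → ℝ} (hp : ∀ i, 0 < p i)
    (hq : ∀ j, 0 < q j) (hpq : ∑ i, p i = ∑ j, q j) :
    ∑ i, ∑ j, M i j * (p i * Real.log (q j)) ≤ ∑ i, p i * Real.log (p i) := by
  have hrow : ∑ i, p i * Real.log (p i) = ∑ i, ∑ j, M i j * (p i * Real.log (p i)) := by
    simp only [← Finset.sum_mul, sum_row_of_mem_doublyStochastic hM, one_mul]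
  have hmass : ∑ i, ∑ j, M i j * (p i - q j) = 0 := by
    simp only [mul_sub, Finset.sum_sub_distrib, ← Finset.sum_mul,
      sum_row_of_mem_doublyStochastic hM, one_mul]
    rw [Finset.sum_comm]
    simp only [← Finset.sum_mul, sum_col_of_mem_doublyStochastic hM, one_mul, hpq, sub_self]
  have hklein : ∑ i, ∑ j, M i j * (p i - q j) ≤
      ∑ i, ∑ j, M i j * (p i * (Real.log (p i) - Real.log (q j))) :=
    Finset.sum_le_sum fun i _ => Finset.sum_le_sum fun j _ =>
      mul_le_mul_of_nonneg_left (Real.sub_le_mul_log_sub_log (hp i) (hq j))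
        (nonneg_of_mem_doublyStochastic hM)
  calc ∑ i, ∑ j, M i j * (p i * Real.log (q j))
      = ∑ i, ∑ j, M i j * (p i * Real.log (p i)) -
          ∑ i, ∑ j, M i j * (p i * (Real.log (p i) - Real.log (q j))) := by
        simp only [← Finset.sum_sub_distrib]
        ring_nf
    _ ≤ ∑ i, ∑ j, M i j * (p i * Real.log (p i)) - ∑ i, ∑ j, M i j * (p i - q j) := by
        gcongr
    _ = ∑ i, p i * Real.log (p i) := by rw [hmass, sub_zero, hrow]

end Matrix

lemma relEnt_eq_sum {n : ℕ} {ρ σ : Matrix (Fin n) (Fin n) ℂ} (hρ : ρ.IsHermitian)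
    (hσ : σ.IsHermitian) :
    relEnt ρ σ = ∑ i, hρ.eigenvalues i * Real.log (hρ.eigenvalues i) -
      ∑ i, ∑ j, Complex.normSq ((star (hρ.eigenvectorUnitary : Matrix (Fin n) (Fin n) ℂ) *
          hσ.eigenvectorUnitary) i j) * (hρ.eigenvalues i * Real.log (hσ.eigenvalues j)) := by
  have hU :
      star (hρ.eigenvectorUnitary : Matrix (Fin n) (Fin n) ℂ) * hρ.eigenvectorUnitary = 1 :=
    (mem_unitaryGroup_iff').mp hρ.eigenvectorUnitary.2
  rw [relEnt, matLog, dif_pos hρ, matLog, dif_pos hσ]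
  nth_rewrite 1 [hρ.spectral_theorem]
  rw [Unitary.conjStarAlgAut_apply, RCLike.ofReal_eq_complex_ofReal, Function.comp_def, mul_sub,
    trace_sub, Complex.sub_re, trace_conj_mul_conj, trace_conj_mul_conj, hU, star_one, mul_one,
    mul_one, diagonal_mul_diagonal, trace_diagonal, trace_diagonal_mul_mul_diagonal_mul_star]
  simp only [← Complex.ofReal_mul, ← Complex.ofReal_sum, Complex.ofReal_re]

theorem relEnt_nonneg_general {n : ℕ} (ρ σ : Matrix (Fin n) (Fin n) ℂ)
    (hρ : ρ.PosDef) (hσ : σ.PosDef) (hρtr : Matrix.trace ρ = 1)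
    (hσtr : Matrix.trace σ = 1) :
    0 ≤ relEnt ρ σ := by
  have hρh := hρ.isHermitian
  have hσh := hσ.isHermitian
  have hmass : ∑ i, hρh.eigenvalues i = ∑ j, hσh.eigenvalues j := by
    have h := hρh.trace_eq_sum_eigenvalues.symm.trans (hρtr.trans hσtr.symm)
    rw [hσh.trace_eq_sum_eigenvalues] at h
    exact_mod_cast h
  rw [relEnt_eq_sum hρh hσh, sub_nonneg]
  exact sum_mul_log_le_of_mem_doublyStochastic
    (normSq_mem_doublyStochastic_of_mem_unitaryGroup
      (mul_mem (Unitary.star_mem hρh.eigenvectorUnitary.2) hσh.eigenvectorUnitary.2))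
    hρ.eigenvalues_pos hσ.eigenvalues_pos hmass

/-- **Nonnegativity of the quantum relative entropy** (the key inequality in the first
half of the proof of Theorem 2): for positive definite density matrices `ρ`, `σ`,
`S(ρ‖σ) = Re (Tr (ρ (log ρ − log σ))) ≥ 0`. -/
theorem relEnt_nonneg {n : ℕ} (hn : 1 ≤ n) (ρ σ : Matrix (Fin n) (Fin n) ℂ)
    (hρ : ρ.PosDef) (hσ : σ.PosDef) (hρtr : Matrix.trace ρ = 1)
    (hσtr : Matrix.trace σ = 1) :
    0 ≤ relEnt ρ σ :=
  relEnt_nonneg_general ρ σ hρ hσ hρtr hσtr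
end

section
/- Let n ≥ 1, let ρ₁, ρ₂ be n×n positive definite Hermitian complex matrices of trace 1, let σ be an n×n positive definite Hermitian matrix of trace 1, and let t ∈ (0, 1). Then S(t·ρ₁ + (1−t)·ρ₂ ‖ σ) ≥ t·S(ρ₁‖σ) + (1−t)·S(ρ₂‖σ) + t·Real.log t + (1−t)·Real.log (1−t). (This is the finite-dimensional version of the almost-affinity lower bound for the relative entropy proved in the paper via the operator monotonicity of the inverse and the logarithm applied to relative modular operators; combined with convexity it shows that the mean relative entropy s(φ‖ω) is affine in its first argument, a key step in the proof of Theorem 3.) -/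
open scoped ComplexOrder

/-!
Writing `ρ = t ρ₁ + (1 - t) ρ₂`, linearity of `X ↦ Tr (X (log ρ - log σ))` gives the exact identity
`S(ρ‖σ) = t S(ρ₁‖σ) + (1 - t) S(ρ₂‖σ) - t S(ρ₁‖ρ) - (1 - t) S(ρ₂‖ρ)`.
Since `t ρ₁ ≤ ρ`, operator monotonicity of the logarithm gives `log (t ρ₁) ≤ log ρ`, whence
`S(ρ₁‖ρ) ≤ -log t`; likewise `S(ρ₂‖ρ) ≤ -log (1 - t)`.
-/

open scoped MatrixOrder Matrix.Norms.L2Operator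

theorem Matrix.PosSemidef.trace_mul_nonneg {ι : Type*} [Fintype ι] {A B : Matrix ι ι ℂ}
    (hA : A.PosSemidef) (hB : B.PosSemidef) : 0 ≤ (A * B).trace := by
  classical
  obtain ⟨C, rfl⟩ := CStarAlgebra.nonneg_iff_eq_star_mul_self.mp hB.nonneg
  rw [← mul_assoc, Matrix.trace_mul_cycle]
  exact (hA.mul_mul_conjTranspose_same C).trace_nonneg

section

variable {n : ℕ} {A B ρ ρ' : Matrix (Fin n) (Fin n) ℂ}

theorem matLog_eq_log_s11 (hA : A.IsHermitian) : matLog A = CFC.log A := by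
  rw [CFC.log, hA.cfc_eq, matLog, dif_pos hA]
  rfl

theorem matLog_le_matLog (hA : A.PosDef) (hAB : A ≤ B) : matLog A ≤ matLog B := by
  have hB : B.PosDef := Matrix.isStrictlyPositive_iff_posDef.mp (hA.isStrictlyPositive.of_le hAB)
  rw [matLog_eq_log_s11 hA.isHermitian, matLog_eq_log_s11 hB.isHermitian]
  exact CFC.log_le_log hAB hA.isStrictlyPositive

theorem matLog_smul (hA : A.PosDef) {r : ℝ} (hr : 0 < r) :
    matLog (r • A) = algebraMap ℝ _ (Real.log r) + matLog A := by
  rw [matLog_eq_log_s11 hA.isHermitian, matLog_eq_log_s11 (hA.smul hr).isHermitian]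
  exact CFC.log_smul' A hr hA.isStrictlyPositive

theorem relEnt_le_neg_log_of_smul_le (hρ' : ρ'.PosDef) (hρ'tr : ρ'.trace = 1) {s : ℝ}
    (hs : 0 < s) (hsρ : s • ρ' ≤ ρ) : relEnt ρ' ρ ≤ -Real.log s := by
  have hsplit : matLog ρ' - matLog ρ =
      algebraMap ℝ _ (-Real.log s) - (matLog ρ - matLog (s • ρ')) := by
    rw [matLog_smul hρ' hs, map_neg]
    abel
  have hmono : 0 ≤ matLog ρ - matLog (s • ρ') :=
    sub_nonneg.mpr (matLog_le_matLog (hρ'.smul hs) hsρ)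
  have htrace := hρ'.posSemidef.trace_mul_nonneg (Matrix.nonneg_iff_posSemidef.mp hmono)
  rw [relEnt, hsplit, mul_sub, Matrix.trace_sub, Algebra.algebraMap_eq_smul_one, mul_smul_one,
    Matrix.trace_smul, hρ'tr]
  simp only [Complex.sub_re, Complex.smul_re, Complex.one_re, smul_eq_mul, mul_one]
  linarith [(Complex.nonneg_iff.mp htrace).1]

theorem relEnt_smul_add_smul (ρ₁ ρ₂ σ : Matrix (Fin n) (Fin n) ℂ) (t : ℝ) :
    relEnt (t • ρ₁ + (1 - t) • ρ₂) σ = t * relEnt ρ₁ σ + (1 - t) * relEnt ρ₂ σ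
      - t * relEnt ρ₁ (t • ρ₁ + (1 - t) • ρ₂)
      - (1 - t) * relEnt ρ₂ (t • ρ₁ + (1 - t) • ρ₂) := by
  set ρ := t • ρ₁ + (1 - t) • ρ₂
  have hsplit (X : Matrix (Fin n) (Fin n) ℂ) : (X * (matLog ρ - matLog σ)).trace =
      (X * (matLog X - matLog σ)).trace - (X * (matLog X - matLog ρ)).trace := by
    rw [← Matrix.trace_sub, ← mul_sub, sub_sub_sub_cancel_left]
  have hlin : (ρ * (matLog ρ - matLog σ)).trace =
      t • (ρ₁ * (matLog ρ - matLog σ)).trace + (1 - t) • (ρ₂ * (matLog ρ - matLog σ)).trace := by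
    rw [add_mul, smul_mul_assoc, smul_mul_assoc, Matrix.trace_add, Matrix.trace_smul,
      Matrix.trace_smul]
  simp only [relEnt, hlin, hsplit, Complex.add_re, Complex.smul_re, Complex.sub_re, smul_eq_mul]
  ring

end

theorem relEnt_convex_combination_lower_bound_general {n : ℕ}
    (ρ₁ ρ₂ σ : Matrix (Fin n) (Fin n) ℂ)
    (hρ₁ : ρ₁.PosDef) (hρ₂ : ρ₂.PosDef)
    (hρ₁tr : Matrix.trace ρ₁ = 1) (hρ₂tr : Matrix.trace ρ₂ = 1)
    (t : ℝ) (ht : t ∈ Set.Ioo (0 : ℝ) 1) :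
    t * relEnt ρ₁ σ + (1 - t) * relEnt ρ₂ σ + t * Real.log t + (1 - t) * Real.log (1 - t)
      ≤ relEnt (t • ρ₁ + (1 - t) • ρ₂) σ := by
  obtain ⟨ht₀, ht₁⟩ := ht
  have ht₁' : 0 < 1 - t := sub_pos.mpr ht₁
  have hle₁ : t • ρ₁ ≤ t • ρ₁ + (1 - t) • ρ₂ :=
    le_add_of_nonneg_right (hρ₂.smul ht₁').posSemidef.nonneg
  have hle₂ : (1 - t) • ρ₂ ≤ t • ρ₁ + (1 - t) • ρ₂ :=
    le_add_of_nonneg_left (hρ₁.smul ht₀).posSemidef.nonneg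
  have hS₁ := relEnt_le_neg_log_of_smul_le hρ₁ hρ₁tr ht₀ hle₁
  have hS₂ := relEnt_le_neg_log_of_smul_le hρ₂ hρ₂tr ht₁' hle₂
  rw [relEnt_smul_add_smul]
  linarith [mul_le_mul_of_nonneg_left hS₁ ht₀.le, mul_le_mul_of_nonneg_left hS₂ ht₁'.le]

/-- **Almost-affinity lower bound for the relative entropy** (finite-dimensional version
of the estimate proved via operator monotonicity of the inverse and the logarithm):
for positive definite density matrices `ρ₁, ρ₂, σ` and `t ∈ (0,1)`,
`S(tρ₁ + (1−t)ρ₂ ‖ σ) ≥ t S(ρ₁‖σ) + (1−t) S(ρ₂‖σ) + t log t + (1−t) log (1−t)`. -/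
theorem relEnt_convex_combination_lower_bound {n : ℕ} (hn : 1 ≤ n)
    (ρ₁ ρ₂ σ : Matrix (Fin n) (Fin n) ℂ)
    (hρ₁ : ρ₁.PosDef) (hρ₂ : ρ₂.PosDef) (hσ : σ.PosDef)
    (hρ₁tr : Matrix.trace ρ₁ = 1) (hρ₂tr : Matrix.trace ρ₂ = 1)
    (hσtr : Matrix.trace σ = 1)
    (t : ℝ) (ht : t ∈ Set.Ioo (0 : ℝ) 1) :
    t * relEnt ρ₁ σ + (1 - t) * relEnt ρ₂ σ + t * Real.log t + (1 - t) * Real.log (1 - t)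
      ≤ relEnt (t • ρ₁ + (1 - t) • ρ₂) σ :=
  relEnt_convex_combination_lower_bound_general ρ₁ ρ₂ σ hρ₁ hρ₂ hρ₁tr hρ₂tr t ht
end
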